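/- For a nonzero subobject X' of X, the following are equivalent: (a) X' is semistable and for every subobject X'' of X properly containing X' one has μ(X'') < μ(X'); (b) X' is of maximal slope and satisfies the same strict-containment condition; (c) X' is the final subobject of X of maximal slope. -/

import Mathlib

open CategoryTheory Limits

universe v u v' u'

variable (C : Type u) [Category.{v} C] [Preadditive C] [HasZeroObject C]
  [HasBinaryBiproducts C]
variable (D : Type u') [Category.{v'} D] [Abelian D]
variable (F : C ⥤ D) [F.Additive] [F.Faithful]
variable (V : Type*) [AddCommGroup V] [LinearOrder V] [IsOrderedAddMonoid V]

/-- The data and axioms of abstract Harder–Narasimhan theory: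
an exact structure on `C` (given by its class of short strict exact sequences),
an exact faithful functor `F : C ⥤ D` inducing bijections between strict
subobjects and subobjects of the image, a rank function on `D` and a degree
function on `C`. -/
structure HNTheory where
  /-- `SSE f g` means `0 ⟶ A ⟶ B ⟶ Z ⟶ 0` is a short strict exact sequence. -/
  SSE : ∀ ⦃A B Z : C⦄, (A ⟶ B) → (B ⟶ Z) → Prop
  sse_comp_zero : ∀ ⦃A B Z : C⦄ (f : A ⟶ B) (g : B ⟶ Z), SSE f g → f ≫ g = 0
  sse_mono : ∀ ⦃A B Z : C⦄ (f : A ⟶ B) (g : B ⟶ Z), SSE f g → Mono f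
  sse_epi : ∀ ⦃A B Z : C⦄ (f : A ⟶ B) (g : B ⟶ Z), SSE f g → Epi g
  sse_isKernel : ∀ ⦃A B Z : C⦄ (f : A ⟶ B) (g : B ⟶ Z) (hfg : SSE f g),
    Nonempty (IsLimit (KernelFork.ofι f (sse_comp_zero f g hfg)))
  sse_isCokernel : ∀ ⦃A B Z : C⦄ (f : A ⟶ B) (g : B ⟶ Z) (hfg : SSE f g),
    Nonempty (IsColimit (CokernelCofork.ofπ g (sse_comp_zero f g hfg)))
  /-- `F` is exact. -/
  F_exact : ∀ ⦃A B Z : C⦄ (f : A ⟶ B) (g : B ⟶ Z) (hfg : SSE f g),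
    (ShortComplex.mk (F.map f) (F.map g)
      (by rw [← F.map_comp, sse_comp_zero f g hfg, F.map_zero])).ShortExact
  /-- `F` induces a bijection between strict subobjects of `X` and subobjects
  of `F(X)`. -/
  strict_sub_bij : ∀ X : C,
    Function.Bijective
      (fun S : {S : Subobject X // ∃ (Z : C) (g : X ⟶ Z), SSE S.arrow g} =>
        imageSubobject (F.map S.1.arrow))
  rk : D → ℕ
  rk_iso : ∀ ⦃X Y : D⦄, (X ≅ Y) → rk X = rk Y
  rk_eq_zero_iff : ∀ X : D, rk X = 0 ↔ IsZero X
  rk_additive : ∀ (S : ShortComplex D), S.ShortExact → rk S.X₂ = rk S.X₁ + rk S.X₃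
  deg : C → V
  deg_iso : ∀ ⦃X Y : C⦄, (X ≅ Y) → deg X = deg Y
  deg_additive : ∀ ⦃A B Z : C⦄ (f : A ⟶ B) (g : B ⟶ Z), SSE f g → deg B = deg A + deg Z
  deg_le_of_FIso : ∀ ⦃X Y : C⦄ (f : X ⟶ Y), IsIso (F.map f) → deg X ≤ deg Y
  deg_eq_iff_of_FIso : ∀ ⦃X Y : C⦄ (f : X ⟶ Y), IsIso (F.map f) → (deg X = deg Y ↔ IsIso f)

namespace HNTheory

variable {C D F V}

/-- The subobject `F(X') ⊆ F(X)` associated to a subobject `X' ⊆ X`. -/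
noncomputable def FSub (_h : HNTheory C D F V) {X : C} (S : Subobject X) :
    Subobject (F.obj X) :=
  imageSubobject (F.map S.arrow)

variable (h : HNTheory C D F V)

/-- The rank of an object of `C` is the rank of its image in `D`. -/
def rkC (X : C) : ℕ := h.rk (F.obj X)

/-- A subobject is strict if it is an admissible (strict) monomorphism,
i.e. fits in a short strict exact sequence. -/
def StrictSub {X : C} (S : Subobject X) : Prop :=
  ∃ (Z : C) (g : X ⟶ Z), h.SSE S.arrow g

/-- `μ(X) ≤ μ(Y)`, in cross-multiplied form `rk(Y) • deg(X) ≤ rk(X) • deg(Y)`. -/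
def muLE (X Y : C) : Prop := h.rkC Y • h.deg X ≤ h.rkC X • h.deg Y

/-- `μ(X) < μ(Y)`, in cross-multiplied form. -/
def muLT (X Y : C) : Prop := h.rkC Y • h.deg X < h.rkC X • h.deg Y

/-- `μ(X) = μ(Y)`, in cross-multiplied form. -/
def muEQ (X Y : C) : Prop := h.rkC Y • h.deg X = h.rkC X • h.deg Y

/-- A nonzero object is semistable if every nonzero proper subobject has
slope at most that of the ambient object. -/
def Semistable (X : C) : Prop :=
  ¬ IsZero X ∧ ∀ S : Subobject X, ¬ IsZero ((S : C)) → S ≠ ⊤ → h.muLE (S : C) X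

/-- A subobject of maximal slope. -/
def MaxSlopeSub {X : C} (S : Subobject X) : Prop :=
  ¬ IsZero ((S : C)) ∧ ∀ T : Subobject X, ¬ IsZero ((T : C)) → h.muLE (T : C) (S : C)

/-- `G` is (a model of) the `i`-th graded piece `c i.succ / c i.castSucc` of a
filtration `c` by strict subobjects. -/
def GrAt {X : C} {N : ℕ} (c : Fin (N + 1) → Subobject X) (i : Fin N) (G : C) : Prop :=
  ∃ (hle : c i.castSucc ≤ c i.succ) (p : ((c i.succ : Subobject X) : C) ⟶ G),
    h.SSE (Subobject.ofLE (c i.castSucc) (c i.succ) hle) p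

/-- `c` is a Harder–Narasimhan filtration. -/
def IsHNFilt {X : C} {N : ℕ} (c : Fin (N + 1) → Subobject X) : Prop :=
  StrictMono c ∧ c 0 = ⊥ ∧ c (Fin.last N) = ⊤ ∧ (∀ i, h.StrictSub (c i)) ∧
  (∀ (i : Fin N) (G : C), h.GrAt c i G → h.Semistable G) ∧
  (∀ (i j : Fin N), i < j → ∀ (Gi Gj : C),
    h.GrAt c i Gi → h.GrAt c j Gj → h.muLT Gj Gi)

end HNTheory

/-!
Let `S ⊆ X` be strict with every subobject of slope at most `μ(S)`, and let `T ⊄ S` with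
`μ(T) ≥ μ(S)`. Take the strict subobject `U` whose image under `F` is the image of `S ⊕ T`. Then
`S` is strict in `U`, and `F` turns `T ⟶ U/S` into an epimorphism; the strict subobject `K ⊆ T`
cut out by its kernel lies in `S`, and `T/K ⟶ U/S` becomes an isomorphism under `F`, so it keeps
the rank and can only raise the degree. Now `μ(K) ≤ μ(S) ≤ μ(T)` gives `μ(T/K) ≥ μ(S)`, hence
`μ(U/S) ≥ μ(S)` and `μ(U) ≥ μ(S)` with `U ⊋ S`.

Hence the strict-containment condition forces `μ(T) < μ(S)` for every `T ⊄ S` (it also makes `S`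
strict, since saturating a subobject keeps its rank and does not lower its degree), which gives
(a) ⇒ (b) ⇒ (c). Subobjects of `S` are subobjects of `X`, giving (b) ⇒ (a); and a `T ⊋ S` with
`μ(T) = μ(S)` would be of maximal slope, giving (c) ⇒ (b).
-/

section Abelian

variable {D : Type*} [Category D] [Abelian D]

lemma imageSubobject_le_kernelSubobject_iff {A B Z : D} (f : A ⟶ B) (g : B ⟶ Z) :
    imageSubobject f ≤ kernelSubobject g ↔ f ≫ g = 0 := by
  refine ⟨fun hle => ?_, image_le_kernel f g⟩
  rw [← kernelSubobject_factors_iff]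
  exact Subobject.factors_of_le f hle (by simpa using imageSubobject_factors_comp_self f (𝟙 A))

lemma epi_of_imageSubobject_comp_eq {A Y Z : D} (p : A ⟶ Y) (n : Y ⟶ Z) [Mono n]
    (hpn : imageSubobject (p ≫ n) = imageSubobject n) : Epi p := by
  rw [imageSubobject_mono n] at hpn
  have hfac : factorThruImageSubobject (p ≫ n) ≫ (Subobject.isoOfEqMk _ n hpn).hom = p := by
    rw [← cancel_mono n, Category.assoc, Subobject.isoOfEqMk_hom, Subobject.ofLEMk_comp,
      imageSubobject_arrow_comp]
  rw [← hfac]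
  infer_instance

lemma mono_of_kernelSubobject_comp_le {B Q' Q : D} (p : B ⟶ Q') [Epi p] (r : Q' ⟶ Q)
    (hpr : kernelSubobject (p ≫ r) ≤ kernelSubobject p) : Mono r := by
  refine Preadditive.mono_of_cancel_zero _ fun x hx => ?_
  have hy : (kernelSubobject (p ≫ r)).Factors (pullback.snd x p) := by
    rw [kernelSubobject_factors_iff, ← Category.assoc, ← pullback.condition, Category.assoc, hx,
      comp_zero]
  have hyp : pullback.snd x p ≫ p = 0 :=
    (kernelSubobject_factors_iff _ _).1 (Subobject.factors_of_le _ hpr hy)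
  exact zero_of_epi_comp (pullback.fst x p) (by rw [pullback.condition, hyp])

end Abelian

lemma epi_map_comp_of_epi_map_desc {C D : Type*} [Category C] [HasZeroMorphisms C] [Category D]
    (G : C ⥤ D) {A B U Q : C} [HasBinaryBiproduct A B] (a : A ⟶ U) (b : B ⟶ U)
    [Epi (G.map (biprod.desc a b))] {q : U ⟶ Q} [Epi (G.map q)] (haq : a ≫ q = 0) :
    Epi (G.map (b ≫ q)) := by
  have hdesc : biprod.desc a b ≫ q = biprod.snd ≫ b ≫ q := by
    ext <;> simp [haq]
  have : Epi (G.map (biprod.snd : A ⊞ B ⟶ B) ≫ G.map (b ≫ q)) := by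
    rw [← G.map_comp, ← hdesc, G.map_comp]
    infer_instance
  exact epi_of_epi (G.map (biprod.snd : A ⊞ B ⟶ B)) _

namespace HNTheory

variable {C : Type*} [Category C] [Preadditive C] {D : Type*} [Category D] [Abelian D]
  {F : C ⥤ D} [F.Additive] {V : Type*} [AddCommGroup V] [LinearOrder V] (h : HNTheory C D F V)

lemma imageSubobject_map_eq_kernelSubobject_map {A B Z : C} {f : A ⟶ B} {g : B ⟶ Z}
    (hfg : h.SSE f g) : imageSubobject (F.map f) = kernelSubobject (F.map g) :=
  (ShortComplex.exact_iff_image_eq_kernel _).1 (h.F_exact f g hfg).exact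

lemma exists_lift_of_sse {A B Z W : C} {f : A ⟶ B} {g : B ⟶ Z} (hfg : h.SSE f g)
    (k : W ⟶ B) (hk : k ≫ g = 0) : ∃ u, u ≫ f = k :=
  ⟨_, (KernelFork.IsLimit.lift' (h.sse_isKernel f g hfg).some k hk).2⟩

lemma exists_desc_of_sse {A B Z W : C} {f : A ⟶ B} {g : B ⟶ Z} (hfg : h.SSE f g)
    (k : B ⟶ W) (hk : f ≫ k = 0) : ∃ r, g ≫ r = k :=
  ⟨_, (CokernelCofork.IsColimit.desc' (h.sse_isCokernel f g hfg).some k hk).2⟩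

lemma exists_strictSub_FSub_eq {Y : C} (W : Subobject (F.obj Y)) :
    ∃ B : Subobject Y, h.StrictSub B ∧ h.FSub B = W := by
  obtain ⟨⟨B, hB⟩, hBW⟩ := (h.strict_sub_bij Y).2 W
  exact ⟨B, hB, hBW⟩

lemma rkC_eq_of_isIso_map {A B : C} (f : A ⟶ B) [IsIso (F.map f)] : h.rkC A = h.rkC B :=
  h.rk_iso (asIso (F.map f))

lemma rkC_add_of_sse {A B Z : C} {f : A ⟶ B} {g : B ⟶ Z} (hfg : h.SSE f g) :
    h.rkC B = h.rkC A + h.rkC Z :=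
  h.rk_additive _ (h.F_exact f g hfg)

lemma deg_eq_zero_of_isZero {A : C} (hA : IsZero A) : h.deg A = 0 := by
  obtain ⟨B, ⟨Z, g, hg⟩, -⟩ := h.exists_strictSub_FSub_eq (⊤ : Subobject (F.obj A))
  -- all three terms of this sequence are zero objects, so `deg A = deg A + deg A`
  have := h.sse_epi _ _ hg
  have hadd := h.deg_additive _ _ hg
  rw [h.deg_iso ((hA.of_mono B.arrow).iso hA), h.deg_iso ((hA.of_epi g).iso hA)] at hadd
  exact left_eq_add.1 hadd

section Faithful

variable [F.Faithful]

lemma imageSubobject_map_le_kernelSubobject_map_iff {A B Z : C} (a : A ⟶ B) (f : B ⟶ Z) :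
    imageSubobject (F.map a) ≤ kernelSubobject (F.map f) ↔ a ≫ f = 0 := by
  rw [imageSubobject_le_kernelSubobject_iff, ← F.map_comp, F.map_eq_zero_iff]

lemma factors_of_imageSubobject_map_le {Y A : C} {B : Subobject Y} (hB : h.StrictSub B)
    {f : A ⟶ Y} (hf : imageSubobject (F.map f) ≤ h.FSub B) : B.Factors f := by
  obtain ⟨Z, g, hg⟩ := hB
  rw [FSub, h.imageSubobject_map_eq_kernelSubobject_map hg,
    imageSubobject_map_le_kernelSubobject_map_iff] at hf
  obtain ⟨u, hu⟩ := h.exists_lift_of_sse hg f hf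
  exact (Subobject.factors_iff _ _).2 ⟨u, hu⟩

lemma mono_map (h : HNTheory C D F V) {A B : C} (f : A ⟶ B) [Mono f] : Mono (F.map f) := by
  obtain ⟨K, -, hK⟩ := h.exists_strictSub_FSub_eq (kernelSubobject (F.map f))
  have hKf : K.arrow ≫ f = 0 := (imageSubobject_map_le_kernelSubobject_map_iff _ _).1 hK.le
  have hker : kernelSubobject (F.map f) = ⊥ := by
    simp [← hK, FSub, zero_of_comp_mono f hKf]
  refine Preadditive.mono_of_cancel_zero _ fun x hx => ?_
  rwa [← Subobject.bot_factors_iff_zero, ← hker, kernelSubobject_factors_iff]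

lemma epi_map_of_imageSubobject_eq {Y A : C} {B : Subobject Y} (u : A ⟶ B)
    (hu : imageSubobject (F.map (u ≫ B.arrow)) = h.FSub B) : Epi (F.map u) := by
  have := h.mono_map B.arrow
  rw [F.map_comp] at hu
  exact epi_of_imageSubobject_comp_eq _ _ hu

lemma exists_strictSub_ge {Y : C} (A : Subobject Y) :
    ∃ B : Subobject Y, h.StrictSub B ∧
      ∃ hAB : A ≤ B, IsIso (F.map (Subobject.ofLE A B hAB)) := by
  obtain ⟨B, hB, hBA⟩ := h.exists_strictSub_FSub_eq (h.FSub A)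
  have hAB : A ≤ B := Subobject.le_of_factors (h.factors_of_imageSubobject_map_le hB hBA.ge)
  refine ⟨B, hB, hAB, ?_⟩
  have := h.mono_map (Subobject.ofLE A B hAB)
  have := h.epi_map_of_imageSubobject_eq (Subobject.ofLE A B hAB)
    (by rw [Subobject.ofLE_arrow, hBA]; rfl)
  exact isIso_of_mono_of_epi _

lemma rkC_pos {A : C} (hA : ¬ IsZero A) : 0 < h.rkC A :=
  Nat.pos_of_ne_zero fun h0 => hA <| by
    rw [IsZero.iff_id_eq_zero, ← F.map_eq_zero_iff, F.map_id, ← IsZero.iff_id_eq_zero]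
    exact (h.rk_eq_zero_iff _).1 h0

lemma strictSub_mk_ofLE {X : C} {S U : Subobject X} (hS : h.StrictSub S) (hSU : S ≤ U) :
    h.StrictSub (Subobject.mk (Subobject.ofLE S U hSU)) := by
  obtain ⟨Z, g, hg⟩ := hS
  obtain ⟨B, hB, hAB, hiso⟩ := h.exists_strictSub_ge (Subobject.mk (Subobject.ofLE S U hSU))
  have := F.epi_of_epi_map (f := Subobject.ofLE _ B hAB) inferInstance
  -- `S` is saturated: `g` kills `B` because it kills `S` and `S ⟶ B` is an epimorphism
  have hBg : (B.arrow ≫ U.arrow) ≫ g = 0 := by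
    refine zero_of_epi_comp (Subobject.ofLE _ B hAB) ?_
    rw [Category.assoc, Subobject.ofLE_arrow_assoc, ← Subobject.underlyingIso_hom_comp_eq_mk,
      Category.assoc, Subobject.ofLE_arrow_assoc, h.sse_comp_zero _ _ hg, comp_zero]
  obtain ⟨v, hv⟩ := h.exists_lift_of_sse hg _ hBg
  have hBA : B ≤ Subobject.mk (Subobject.ofLE S U hSU) :=
    Subobject.le_mk_of_comm v
      (by rw [← cancel_mono U.arrow, Category.assoc, Subobject.ofLE_arrow, hv])
  rwa [le_antisymm hAB hBA]

lemma exists_sse_isIso_map_of_epi_map {Y Q : C} (m : Y ⟶ Q) [Epi (F.map m)] :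
    ∃ (K Q' : C) (i : K ⟶ Y) (π : Y ⟶ Q') (r : Q' ⟶ Q),
      h.SSE i π ∧ i ≫ m = 0 ∧ π ≫ r = m ∧ IsIso (F.map r) := by
  obtain ⟨K, ⟨Q', π, hπ⟩, hK⟩ := h.exists_strictSub_FSub_eq (kernelSubobject (F.map m))
  have him : K.arrow ≫ m = 0 := (imageSubobject_map_le_kernelSubobject_map_iff _ _).1 hK.le
  obtain ⟨r, hr⟩ := h.exists_desc_of_sse hπ m him
  refine ⟨K, Q', K.arrow, π, r, hπ, him, hr, ?_⟩
  have : Epi (F.map π) := (h.F_exact _ _ hπ).epi_g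
  have : Epi (F.map π ≫ F.map r) := by rwa [← F.map_comp, hr]
  have : Epi (F.map r) := epi_of_epi (F.map π) _
  have : Mono (F.map r) := mono_of_kernelSubobject_comp_le (F.map π) (F.map r) (by
    rw [← F.map_comp, hr, ← hK, FSub, h.imageSubobject_map_eq_kernelSubobject_map hπ])
  exact isIso_of_mono_of_epi _

section

variable [HasBinaryBiproducts C]

lemma exists_ge_ge_epi_map_desc (h : HNTheory C D F V) {X : C} (S T : Subobject X) :
    ∃ (U : Subobject X) (hSU : S ≤ U) (hTU : T ≤ U),
      Epi (F.map (biprod.desc (Subobject.ofLE S U hSU) (Subobject.ofLE T U hTU))) := by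
  obtain ⟨U, hU, hFU⟩ :=
    h.exists_strictSub_FSub_eq (imageSubobject (F.map (biprod.desc S.arrow T.arrow)))
  have hle : ∀ {A : Subobject X} (i : (A : C) ⟶ (S : C) ⊞ (T : C)),
      i ≫ biprod.desc S.arrow T.arrow = A.arrow → A ≤ U := fun i hi =>
    Subobject.le_of_factors (h.factors_of_imageSubobject_map_le hU
      (by rw [hFU, ← hi, F.map_comp]; exact imageSubobject_comp_le _ _))
  have hSU := hle biprod.inl (biprod.inl_desc _ _)
  have hTU := hle biprod.inr (biprod.inr_desc _ _)
  refine ⟨U, hSU, hTU, h.epi_map_of_imageSubobject_eq _ ?_⟩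
  rw [hFU]
  congr 2
  ext <;> simp

end

end Faithful

lemma not_muLE_iff_muLT {A B : C} : ¬ h.muLE A B ↔ h.muLT B A := not_le

lemma muLE_iff_of_iso_left {A A' B : C} (e : A ≅ A') : h.muLE A B ↔ h.muLE A' B := by
  rw [muLE, muLE, h.deg_iso e, h.rkC_eq_of_isIso_map e.hom]

lemma muLE_of_isZero_left {A B : C} (hA : IsZero A) : h.muLE A B := by
  have hrk : h.rkC A = 0 := (h.rk_eq_zero_iff _).2 (F.map_isZero hA)
  simp only [muLE, h.deg_eq_zero_of_isZero hA, hrk, smul_zero, zero_smul, le_refl]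

section

variable {h}

lemma MaxSlopeSub.muLE_of_mono {X A : C} {S : Subobject X} (hS : h.MaxSlopeSub S)
    (j : A ⟶ (S : C)) [Mono j] : h.muLE A S := by
  by_cases hA : IsZero A
  · exact h.muLE_of_isZero_left hA
  · have e := Subobject.underlyingIso (j ≫ S.arrow)
    exact (h.muLE_iff_of_iso_left e).1 (hS.2 _ fun hz => hA (hz.of_iso e.symm))

end

lemma semistable_of_maxSlopeSub {X : C} {S : Subobject X} (hS : h.MaxSlopeSub S) :
    h.Semistable (S : C) :=
  ⟨hS.1, fun A _ _ => hS.muLE_of_mono A.arrow⟩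

variable [IsOrderedAddMonoid V]

lemma muLE_of_isIso_map {A B : C} (f : A ⟶ B) [IsIso (F.map f)] : h.muLE A B := by
  rw [muLE, h.rkC_eq_of_isIso_map f]
  exact nsmul_le_nsmul_right (h.deg_le_of_FIso f inferInstance) _

section

variable {h}

lemma Semistable.muLE_of_mono {Y A : C} (hY : h.Semistable Y) (j : A ⟶ Y) [Mono j] :
    h.muLE A Y := by
  by_cases hA : IsZero A
  · exact h.muLE_of_isZero_left hA
  by_cases htop : Subobject.mk j = ⊤
  · have := (Subobject.isIso_iff_mk_eq_top j).2 htop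
    exact h.muLE_of_isIso_map j
  · have e := Subobject.underlyingIso j
    exact (h.muLE_iff_of_iso_left e).1 (hY.2 _ (fun hz => hA (hz.of_iso e.symm)) htop)

end

lemma muLE_trans_isIso_map {W A B : C} (hWA : h.muLE W A) (f : A ⟶ B) [IsIso (F.map f)] :
    h.muLE W B := by
  rw [muLE, ← h.rkC_eq_of_isIso_map f]
  exact hWA.trans (nsmul_le_nsmul_right (h.deg_le_of_FIso f inferInstance) _)

lemma muLE_middle_of_sse {W A B Z : C} {f : A ⟶ B} {g : B ⟶ Z} (hfg : h.SSE f g)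
    (hA : h.muLE W A) (hZ : h.muLE W Z) : h.muLE W B := by
  rw [muLE, h.rkC_add_of_sse hfg, h.deg_additive f g hfg, add_nsmul, smul_add]
  exact add_le_add hA hZ

lemma muLE_quotient_of_sse {W A B Z : C} {f : A ⟶ B} {g : B ⟶ Z} (hfg : h.SSE f g)
    (hA : h.muLE A W) (hB : h.muLE W B) : h.muLE W Z := by
  rw [muLE, h.rkC_add_of_sse hfg, h.deg_additive f g hfg, add_nsmul, smul_add] at hB
  exact le_of_add_le_add_left (hB.trans (add_le_add_left hA _))

variable [F.Faithful]

lemma muLE_trans {A B E : C} (hAB : h.muLE A B) (hBE : h.muLE B E)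
    (hB : ¬ IsZero B) : h.muLE A E := by
  refine le_of_nsmul_le_nsmul_right (h.rkC_pos hB).ne' ?_
  calc h.rkC B • h.rkC E • h.deg A = h.rkC E • h.rkC B • h.deg A := smul_comm _ _ _
    _ ≤ h.rkC E • h.rkC A • h.deg B := nsmul_le_nsmul_right hAB _
    _ = h.rkC A • h.rkC E • h.deg B := smul_comm _ _ _
    _ ≤ h.rkC A • h.rkC B • h.deg E := nsmul_le_nsmul_right hBE _
    _ = h.rkC B • h.rkC A • h.deg E := smul_comm _ _ _

lemma strictSub_of_forall_gt_muLT {X : C} {S : Subobject X}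
    (hcond : ∀ T : Subobject X, S < T → h.muLT T S) : h.StrictSub S := by
  obtain ⟨B, hB, hSB, hiso⟩ := h.exists_strictSub_ge S
  obtain rfl | hlt := hSB.eq_or_lt
  · exact hB
  · exact absurd (h.muLE_of_isIso_map (Subobject.ofLE S B hSB)) (hcond B hlt).not_ge

lemma muLT_of_lt_of_maxSlopeSub {X : C} {S T : Subobject X} (hS : h.MaxSlopeSub S)
    (hfin : ∀ U : Subobject X, h.MaxSlopeSub U → U ≤ S) (hST : S < T) : h.muLT T S := by
  refine h.not_muLE_iff_muLT.1 fun hTS => hST.not_ge (hfin T ⟨fun hz => ?_, fun W hW => ?_⟩)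
  · exact hS.1 (hz.of_mono (Subobject.ofLE S T hST.le))
  · exact h.muLE_trans (hS.2 W hW) hTS hS.1

variable [HasBinaryBiproducts C]

lemma exists_gt_muLE_of_not_le {X : C} {S T : Subobject X} (hS : h.StrictSub S)
    (hsub : ∀ (A : C) (j : A ⟶ (S : C)), Mono j → h.muLE A S)
    (hTS : ¬ T ≤ S) (hST : h.muLE S T) : ∃ U : Subobject X, S < U ∧ h.muLE S U := by
  obtain ⟨U, hSU, hTU, hepi⟩ := h.exists_ge_ge_epi_map_desc S T
  refine ⟨U, hSU.lt_of_ne fun e => hTS (e ▸ hTU), ?_⟩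
  obtain ⟨Q, q, hq⟩ := h.strictSub_mk_ofLE hS hSU
  let es : (Subobject.mk (Subobject.ofLE S U hSU) : C) ≅ S := Subobject.underlyingIso _
  have hSq : Subobject.ofLE S U hSU ≫ q = 0 := by
    rw [← Subobject.underlyingIso_arrow (Subobject.ofLE S U hSU), Category.assoc,
      h.sse_comp_zero _ _ hq, comp_zero]
  have : Epi (F.map q) := (h.F_exact _ _ hq).epi_g
  have : Epi (F.map (Subobject.ofLE T U hTU ≫ q)) :=
    epi_map_comp_of_epi_map_desc F (Subobject.ofLE S U hSU) (Subobject.ofLE T U hTU) hSq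
  obtain ⟨K, Q', i, π, r, hπ, him, -, hr⟩ :=
    h.exists_sse_isIso_map_of_epi_map (Subobject.ofLE T U hTU ≫ q)
  obtain ⟨w, hw⟩ := h.exists_lift_of_sse hq (i ≫ Subobject.ofLE T U hTU)
    (by rwa [Category.assoc])
  have := h.sse_mono _ _ hπ
  have hKS : (w ≫ es.hom) ≫ S.arrow = i ≫ T.arrow := by
    rw [← Subobject.ofLE_arrow hTU, ← Subobject.ofLE_arrow hSU, ← Category.assoc i, ← hw]
    simp [es, ← Subobject.underlyingIso_hom_comp_eq_mk]
  have := mono_of_mono_fac hKS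
  have hSQ : h.muLE S Q :=
    h.muLE_trans_isIso_map (h.muLE_quotient_of_sse hπ (hsub K _ this) hST) r
  exact h.muLE_middle_of_sse hq (h.muLE_trans_isIso_map le_rfl es.inv) hSQ

lemma muLT_of_not_le {X : C} {S T : Subobject X}
    (hsub : ∀ (A : C) (j : A ⟶ (S : C)), Mono j → h.muLE A S)
    (hcond : ∀ U : Subobject X, S < U → h.muLT U S) (hTS : ¬ T ≤ S) : h.muLT T S := by
  refine h.not_muLE_iff_muLT.1 fun hST => ?_
  obtain ⟨U, hSU, hU⟩ :=
    h.exists_gt_muLE_of_not_le (h.strictSub_of_forall_gt_muLT hcond) hsub hTS hST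
  exact h.not_muLE_iff_muLT.2 (hcond U hSU) hU

lemma maxSlopeSub_of_semistable {X : C} {S : Subobject X} (hS : h.Semistable (S : C))
    (hcond : ∀ T : Subobject X, S < T → h.muLT T S) : h.MaxSlopeSub S := by
  refine ⟨hS.1, fun T _ => ?_⟩
  by_cases hTS : T ≤ S
  · exact hS.muLE_of_mono (Subobject.ofLE T S hTS)
  · exact (h.muLT_of_not_le (fun _ j _ => hS.muLE_of_mono j) hcond hTS).le

lemma le_of_maxSlopeSub {X : C} {S T : Subobject X} (hS : h.MaxSlopeSub S)
    (hcond : ∀ U : Subobject X, S < U → h.muLT U S) (hT : h.MaxSlopeSub T) : T ≤ S := by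
  by_contra hTS
  exact h.not_muLE_iff_muLT.2 (h.muLT_of_not_le (fun _ j _ => hS.muLE_of_mono j) hcond hTS)
    (hT.2 S hS.1)

end HNTheory

theorem stmt16 (h : HNTheory C D F V) {X : C} (S : Subobject X) :
    ((h.Semistable (S : C) ∧ ∀ T : Subobject X, S < T → h.muLT (T : C) (S : C)) ↔
     (h.MaxSlopeSub S ∧ ∀ T : Subobject X, S < T → h.muLT (T : C) (S : C))) ∧
    ((h.MaxSlopeSub S ∧ ∀ T : Subobject X, S < T → h.muLT (T : C) (S : C)) ↔
     (h.MaxSlopeSub S ∧ ∀ T : Subobject X, h.MaxSlopeSub T → T ≤ S)) :=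
  ⟨⟨fun ⟨hsem, hcond⟩ => ⟨h.maxSlopeSub_of_semistable hsem hcond, hcond⟩,
      fun ⟨hmax, hcond⟩ => ⟨h.semistable_of_maxSlopeSub hmax, hcond⟩⟩,
    ⟨fun ⟨hmax, hcond⟩ => ⟨hmax, fun _ hT => h.le_of_maxSlopeSub hmax hcond hT⟩,
      fun ⟨hmax, hfin⟩ => ⟨hmax, fun _ => h.muLT_of_lt_of_maxSlopeSub hmax hfin⟩⟩⟩
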